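/- arXiv:2605.03067 — 11 statements merged into one kernel-verified Lean document; each statement's English description precedes it below -/
import Mathlib

section
/- If a 0-1 matrix A (rows = voters, columns = candidates) admits a 1D voter-candidate interval explanation (i.e., each row i and column j can be assigned a closed interval on the real line such that A[i][j] = 1 iff the two intervals intersect) and is domination-free (no column's support set of rows is a strict subset of another column's support set), then A has the candidate-interval property: the columns can be reordered so that in every row the 1-entries form a contiguous interval (consecutive ones property for rows). -/
/-!
Represent the columns by their intervals `[cl j, cr j]` and order them by left endpoint.
If a row meets the intervals of columns `j` and `l` but misses that of a column `k` lying
between them in this order, it must miss `k` on the left, so `cr k < cr j` while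
`cl j ≤ cl k`: the interval of `k` sits inside that of `j`, whence the support of `k` is
strictly contained in that of `j`, which domination-freeness forbids.
-/

/-- `A` admits a 1D voter-candidate interval explanation: each row and each column is
assigned a closed real interval, and an entry is `1` iff the two intervals intersect. -/
def IsVCI {n m : ℕ} (A : Fin n → Fin m → Bool) : Prop :=
  ∃ (vl vr : Fin n → ℝ) (cl cr : Fin m → ℝ),
    (∀ i, vl i ≤ vr i) ∧ (∀ j, cl j ≤ cr j) ∧
    ∀ i j, A i j = true ↔ (Set.Icc (vl i) (vr i) ∩ Set.Icc (cl j) (cr j)).Nonempty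

/-- No column's support set is a strict subset of another column's support set. -/
def DominationFree {n m : ℕ} (A : Fin n → Fin m → Bool) : Prop :=
  ¬ ∃ j j' : Fin m, {i | A i j' = true} ⊂ {i | A i j = true}

/-- Candidate-interval (consecutive-ones for rows) property: the columns can be reordered so
that in every row the `1`-entries occupy consecutive positions. -/
def HasCI {n m : ℕ} (A : Fin n → Fin m → Bool) : Prop :=
  ∃ σ : Fin m ≃ Fin m, ∀ i : Fin n, ∀ p q s : Fin m, p ≤ q → q ≤ s →
    A i (σ p) = true → A i (σ s) = true → A i (σ q) = true

open Set

def IsIntervalModel {ι κ α : Type*} [LinearOrder α] (A : ι → κ → Bool)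
    (vl vr : ι → α) (cl cr : κ → α) : Prop :=
  (∀ i, vl i ≤ vr i) ∧ (∀ j, cl j ≤ cr j) ∧
    ∀ i j, A i j = true ↔ (Icc (vl i) (vr i) ∩ Icc (cl j) (cr j)).Nonempty

theorem Set.Icc_inter_Icc_nonempty_iff {α : Type*} [LinearOrder α] {a b c d : α}
    (hab : a ≤ b) (hcd : c ≤ d) : (Icc a b ∩ Icc c d).Nonempty ↔ c ≤ b ∧ a ≤ d := by
  rw [Icc_inter_Icc, nonempty_Icc, sup_le_iff, le_inf_iff, le_inf_iff]
  exact ⟨fun ⟨⟨_, hd⟩, hb, _⟩ => ⟨hb, hd⟩, fun ⟨hb, hd⟩ => ⟨⟨hab, hd⟩, hb, hcd⟩⟩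

namespace IsIntervalModel

variable {ι κ α : Type*} [LinearOrder α] {A : ι → κ → Bool}
  {vl vr : ι → α} {cl cr : κ → α}

theorem apply_eq_true_iff (hM : IsIntervalModel A vl vr cl cr) (i : ι) (j : κ) :
    A i j = true ↔ cl j ≤ vr i ∧ vl i ≤ cr j := by
  rw [hM.2.2, Icc_inter_Icc_nonempty_iff (hM.1 i) (hM.2.1 j)]

theorem support_subset_of_Icc_subset (hM : IsIntervalModel A vl vr cl cr) {j k : κ}
    (hjk : Icc (cl k) (cr k) ⊆ Icc (cl j) (cr j)) :
    {i | A i k = true} ⊆ {i | A i j = true} := fun i hi =>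
  (hM.2.2 i j).2 <| ((hM.2.2 i k).1 hi).mono (inter_subset_inter_right _ hjk)

theorem apply_eq_true_of_cl_le_of_cl_le (hM : IsIntervalModel A vl vr cl cr)
    (hDF : ∀ j k, ¬ {i | A i k = true} ⊂ {i | A i j = true}) {i : ι} {j k l : κ}
    (hjk : cl j ≤ cl k) (hkl : cl k ≤ cl l) (hj : A i j = true) (hl : A i l = true) :
    A i k = true := by
  obtain ⟨-, hij⟩ := (hM.apply_eq_true_iff i j).1 hj
  obtain ⟨hli, -⟩ := (hM.apply_eq_true_iff i l).1 hl
  refine (hM.apply_eq_true_iff i k).2 ⟨hkl.trans hli, not_lt.1 fun hki => hDF j k ⟨?_, ?_⟩⟩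
  · exact hM.support_subset_of_Icc_subset (Icc_subset_Icc hjk (hki.le.trans hij))
  · exact fun hsub => ((hM.apply_eq_true_iff i k).1 (hsub hj)).2.not_gt hki

end IsIntervalModel

theorem vci_dominationFree_implies_CI {n m : ℕ} (A : Fin n → Fin m → Bool)
    (hVCI : IsVCI A) (hDF : DominationFree A) : HasCI A := by
  obtain ⟨vl, vr, cl, cr, hM⟩ : ∃ vl vr cl cr, IsIntervalModel A vl vr cl cr := hVCI
  have hsort := Tuple.monotone_sort cl
  exact ⟨Tuple.sort cl, fun _ _ _ _ hpq hqs =>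
    hM.apply_eq_true_of_cl_le_of_cl_le (fun j k h => hDF ⟨j, k, h⟩) (hsort hpq) (hsort hqs)⟩
end

section
/- If a 0-1 matrix A is linearly consistent (there exists a linear order ≻ on the disjoint union of rows and columns such that for all rows i ≻ i' and columns a ≻ b, A[i][b] = 1 and A[i'][a] = 1 imply A[i][a] = 1) and A is domination-free (no column's support is strictly contained in another column's support), then A has the consecutive-ones property for rows: ordering the columns according to ≻, in every row the 1-entries form a contiguous interval. -/
/-!
Suppose row `i` has `1`s in columns `a ≻ b ≻ c` but a `0` in column `b`. Since column `b` is not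
dominated by column `a`, some row `i'` has a `1` in `b` and a `0` in `a`. If `i ≻ i'`, linear
consistency applied to `A i c = 1` and `A i' b = 1` forces `A i b = 1`; if `i' ≻ i`, applied to
`A i' b = 1` and `A i a = 1` it forces `A i' a = 1`; and `i ≠ i'` as they differ in column `a`.
-/

/-- The linear-consistency condition for a given strict order `r` (where `r x y` means
`x ≻ y`) on the disjoint union of rows and columns. -/
def LCCond {n m : ℕ} (A : Fin n → Fin m → Bool)
    (r : (Fin n ⊕ Fin m) → (Fin n ⊕ Fin m) → Prop) : Prop :=
  ∀ (i i' : Fin n) (a b : Fin m), r (Sum.inl i) (Sum.inl i') → r (Sum.inr a) (Sum.inr b) →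
    A i b = true → A i' a = true → A i a = true

theorem DominationFree.exists_row_one_zero {n m : ℕ} {A : Fin n → Fin m → Bool}
    (hDF : DominationFree A) {i : Fin n} {a b : Fin m} (hia : A i a = true) (hib : A i b = false) :
    ∃ i', A i' b = true ∧ A i' a = false := by
  have hnsub : ¬ {x | A x b = true} ⊆ {x | A x a = true} := fun hsub ↦
    hDF ⟨a, b, hsub, fun hsub' ↦ by simp_all [Set.subset_def]⟩
  obtain ⟨i', hi'b, hi'a⟩ := Set.not_subset.mp hnsub
  exact ⟨i', hi'b, by simpa using hi'a⟩

/-- If `A` is linearly consistent via the strict linear order `r` and `A` is domination-free,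
then ordering the columns according to `r`, the `1`-entries of every row are contiguous. -/
theorem lc_dominationFree_implies_CI {n m : ℕ} (A : Fin n → Fin m → Bool)
    (r : (Fin n ⊕ Fin m) → (Fin n ⊕ Fin m) → Prop)
    (hSTO : IsStrictTotalOrder _ r) (hLC : LCCond A r) (hDF : DominationFree A) :
    ∀ (i : Fin n) (a b c : Fin m), r (Sum.inr a) (Sum.inr b) → r (Sum.inr b) (Sum.inr c) →
      A i a = true → A i c = true → A i b = true := by
  intro i a b c hab hbc hia hic
  have := hSTO
  by_contra hib
  obtain ⟨i', hi'b, hi'a⟩ := hDF.exists_row_one_zero hia (by simpa using hib)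
  rcases trichotomous_of r (Sum.inl i) (Sum.inl i') with hii' | hii' | hi'i
  · exact hib (hLC i i' b c hii' hbc hic hi'b)
  · obtain rfl : i = i' := Sum.inl_injective hii'
    simp [hia] at hi'a
  · simp [hLC i' i a b hi'i hab hi'b hia] at hi'a
end

section
/- If a 0-1 matrix A is linearly consistent, then A admits a voter-contains-candidate-interval explanation: there exist closed real intervals I_i for each row i and J_c for each column c such that A[i][c] = 1 if and only if J_c ⊆ I_i. -/
/-!
Fix a strict total order witnessing linear consistency and rank rows and columns by it. Put
every column `c` at a point `q c` and every row `i` at a point `p i`, all columns to the left of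
all rows. Row `i` gets the interval from the leftmost column it approves to `p i`, and column `c`
the interval from `q c` to the lowest row approving it (a row or column approving nothing gets a
default endpoint beyond all points). Approval gives containment at once.
Conversely, containment yields a column `b ≤ c` approved by `i` and a row `j ≤ i` approving `c`,
and linear consistency applied to `i ≻ j`, `c ≻ b` gives `A i c = 1`.
-/

/-- `A` is linearly consistent: there is a strict linear order `r` (where `r x y` means
`x ≻ y`) on the disjoint union of rows and columns such that for rows `i ≻ j` and columns
`a ≻ b`, `A[i][b] = 1` and `A[j][a] = 1` imply `A[i][a] = 1`. -/
def IsLC {n m : ℕ} (A : Fin n → Fin m → Bool) : Prop :=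
  ∃ r : (Fin n ⊕ Fin m) → (Fin n ⊕ Fin m) → Prop,
    IsStrictTotalOrder _ r ∧
    ∀ (i j : Fin n) (a b : Fin m), r (Sum.inl i) (Sum.inl j) → r (Sum.inr a) (Sum.inr b) →
      A i b = true → A j a = true → A i a = true

open Finset

theorem Finset.exists_mem_le_of_min'_insert_le {ι δ : Type*} [LinearOrder δ] (s : Finset ι)
    (f : ι → δ) {d x : δ} (hx : x < d)
    (h : (insert d (s.image f)).min' (insert_nonempty _ _) ≤ x) : ∃ b ∈ s, f b ≤ x := by
  obtain hd | ⟨b, hb, hfb⟩ :=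
    mem_insert.mp (min'_mem _ (insert_nonempty d (s.image f))) |>.imp_right mem_image.mp
  · exact absurd (hd ▸ h) hx.not_ge
  · exact ⟨b, hb, hfb ▸ h⟩

theorem exists_rank_of_isStrictTotalOrder {γ : Type*} [Fintype γ] (r : γ → γ → Prop)
    [IsStrictTotalOrder γ r] :
    ∃ φ : γ → ℕ, (∀ x, φ x < Fintype.card γ) ∧ ∀ x y, φ y ≤ φ x ↔ y = x ∨ r x y := by
  classical
  let := linearOrderOfSTO (Function.swap r)
  let e := (Fintype.orderIsoFinOfCardEq γ rfl).symm
  exact ⟨fun x => e x, fun x => (e x).isLt, fun x y => Fin.val_fin_le.trans e.le_iff_le⟩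

theorem exists_interval_containment_of_scores {α β δ : Type*} [Fintype α] [Fintype β]
    [LinearOrder δ] (s : α → β → Prop) (p : α → δ) (q : β → δ) (P : δ)
    (hqp : ∀ c i, q c < p i) (hpP : ∀ i, p i < P) (hqP : ∀ c, q c < P)
    (hs : ∀ i j a b, p j ≤ p i → q b ≤ q a → s i b → s j a → s i a) :
    ∃ (L R : α → δ) (l r : β → δ), (∀ i, L i ≤ R i) ∧ (∀ c, l c ≤ r c) ∧
      ∀ i c, s i c ↔ (L i ≤ l c ∧ r c ≤ R i) := by
  classical
  refine ⟨fun i => (insert (p i) ((univ.filter (s i)).image q)).min' (insert_nonempty _ _), p, q,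
    fun c => (insert P ((univ.filter (s · c)).image p)).min' (insert_nonempty _ _), ?_, ?_, ?_⟩
  · exact fun i => min'_le _ _ (mem_insert_self _ _)
  · refine fun c => le_min' _ _ _ fun x hx => ?_
    obtain rfl | ⟨j, -, rfl⟩ := mem_insert.mp hx |>.imp_right mem_image.mp
    · exact (hqP c).le
    · exact (hqp c j).le
  · refine fun i c => ⟨fun hic => ⟨?_, ?_⟩, fun ⟨hL, hR⟩ => ?_⟩
    · exact min'_le _ _ (mem_insert_of_mem (mem_image_of_mem q (by simpa using hic)))
    · exact min'_le _ _ (mem_insert_of_mem (mem_image_of_mem p (by simpa using hic)))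
    · obtain ⟨b, hb, hbc⟩ := exists_mem_le_of_min'_insert_le _ _ (hqp c i) hL
      obtain ⟨j, hj, hji⟩ := exists_mem_le_of_min'_insert_le _ _ (hpP i) hR
      exact hs i j c b hji hbc (mem_filter.mp hb).2 (mem_filter.mp hj).2

/-- If `A` is linearly consistent, then it admits a voter-contains-candidate-interval
explanation: closed intervals `[L i, R i]` for rows and `[l c, r c]` for columns with
`A[i][c] = 1` iff `[l c, r c] ⊆ [L i, R i]` (via endpoints). -/
theorem lc_implies_vcci {n m : ℕ} (A : Fin n → Fin m → Bool) (hLC : IsLC A) :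
    ∃ (L R : Fin n → ℝ) (l r : Fin m → ℝ),
      (∀ i, L i ≤ R i) ∧ (∀ c, l c ≤ r c) ∧
      ∀ i c, A i c = true ↔ (L i ≤ l c ∧ r c ≤ R i) := by
  obtain ⟨r, hr, hLC⟩ := hLC
  obtain ⟨φ, hφN, hφ⟩ := exists_rank_of_isStrictTotalOrder r
  set N := Fintype.card (Fin n ⊕ Fin m)
  refine exists_interval_containment_of_scores (fun i c => A i c = true)
    (fun i => ((φ (.inl i) + N : ℕ) : ℝ)) (fun c => (φ (.inr c) : ℝ)) ((2 * N : ℕ) : ℝ)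
    (fun c i => Nat.cast_lt.mpr (by grind)) (fun i => Nat.cast_lt.mpr (by grind))
    (fun c => Nat.cast_lt.mpr (by grind)) fun i j a b hji hba hib hja => ?_
  obtain hji | hij := (hφ _ _).mp (by simpa using hji)
  · exact Sum.inl_injective hji ▸ hja
  obtain hba | hab := (hφ _ _).mp (by simpa using hba)
  · exact Sum.inr_injective hba ▸ hib
  exact hLC i j a b hij hab hib hja
end

section
/- If a 0-1 matrix A admits a voter-contains-candidate-interval explanation (closed intervals I_i for rows and J_c for columns with A[i][c] = 1 iff J_c ⊆ I_i), then A is linearly consistent: any joint linear order of rows by increasing left endpoint of I_i and columns by increasing right endpoint of J_c witnesses linear consistency. -/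
theorem vcci_implies_lc_general {n m : ℕ} (A : Fin n → Fin m → Bool)
    (L R : Fin n → ℝ) (l r : Fin m → ℝ)
    (hA : ∀ i c, A i c = true ↔ (L i ≤ l c ∧ r c ≤ R i))
    (ord : (Fin n ⊕ Fin m) → (Fin n ⊕ Fin m) → Prop)
    (hrow : ∀ i j : Fin n, ord (Sum.inl i) (Sum.inl j) → L i ≤ L j)
    (hcol : ∀ a b : Fin m, ord (Sum.inr a) (Sum.inr b) → r a ≤ r b) :
    ∀ (i j : Fin n) (a b : Fin m), ord (Sum.inl i) (Sum.inl j) → ord (Sum.inr a) (Sum.inr b) →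
      A i b = true → A j a = true → A i a = true := by
  intro i j a b hij hab hib hja
  rw [hA] at hib hja ⊢
  exact ⟨(hrow i j hij).trans hja.1, (hcol a b hab).trans hib.2⟩

/-- If `A` admits a voter-contains-candidate-interval explanation (closed intervals
`[L i, R i]` for rows and `[l c, r c]` for columns with `A[i][c] = 1` iff
`L i ≤ l c ∧ r c ≤ R i`), then any joint strict linear order of rows by increasing left
endpoint and columns by increasing right endpoint witnesses linear consistency. -/
theorem vcci_implies_lc {n m : ℕ} (A : Fin n → Fin m → Bool)
    (L R : Fin n → ℝ) (l r : Fin m → ℝ)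
    (hI : ∀ i, L i ≤ R i) (hJ : ∀ c, l c ≤ r c)
    (hA : ∀ i c, A i c = true ↔ (L i ≤ l c ∧ r c ≤ R i))
    (ord : (Fin n ⊕ Fin m) → (Fin n ⊕ Fin m) → Prop)
    (hSTO : IsStrictTotalOrder _ ord)
    (hrow : ∀ i j : Fin n, ord (Sum.inl i) (Sum.inl j) → L i ≤ L j)
    (hcol : ∀ a b : Fin m, ord (Sum.inr a) (Sum.inr b) → r a ≤ r b) :
    ∀ (i j : Fin n) (a b : Fin m), ord (Sum.inl i) (Sum.inl j) → ord (Sum.inr a) (Sum.inr b) →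
      A i b = true → A j a = true → A i a = true :=
  vcci_implies_lc_general A L R l r hA ord hrow hcol
end

section
/- The class of 0-1 matrices with a linearly consistent explanation equals the class of 0-1 matrices with a voter-contains-candidate-interval explanation: A is linearly consistent if and only if there exist closed real intervals I_i for rows and J_c for columns with A[i][c] = 1 iff J_c ⊆ I_i. -/
/-- `A` admits a voter-contains-candidate-interval explanation. -/
def IsVCCI {n m : ℕ} (A : Fin n → Fin m → Bool) : Prop :=
  ∃ (L R : Fin n → ℝ) (l r : Fin m → ℝ),
    (∀ i, L i ≤ R i) ∧ (∀ c, l c ≤ r c) ∧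
    ∀ i c, A i c = true ↔ (L i ≤ l c ∧ r c ≤ R i)

/-!
Both conditions are equivalent to the existence of scores `p` on rows and `q` on columns, with
values in a linear order, such that `p i ≤ p j`, `q a ≤ q b`, `A i b` and `A j a` imply `A i a`.
Interval explanations give such scores (left endpoints of rows, right endpoints of columns), and
so do linear orders (ranks); conversely, breaking ties of the scores yields a linear order, and
natural-number scores yield intervals: fix the left ends of rows and the right ends of columns by
the scores, then make each column start at the latest start of a row approving it and each row
end at the latest end of a column it approves.
-/

open Finset Function

theorem exists_nat_rank {α : Type*} [Fintype α] (r : α → α → Prop) [IsStrictTotalOrder α r] :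
    ∃ f : α → ℕ, ∀ x y, r x y ↔ f x < f y := by
  classical
  have rank_lt : ∀ x y, r x y → #{z | r z x} < #{z | r z y} := by
    refine fun x y hxy ↦ card_lt_card ⟨fun z hz ↦ ?_, fun hsub ↦ ?_⟩
    · simp only [mem_filter, mem_univ, true_and] at hz ⊢
      exact _root_.trans hz hxy
    · have : x ∈ ({z | r z x} : Finset α) := hsub (by simpa using hxy)
      exact irrefl x (by simpa using this)
  refine ⟨fun x ↦ #{z | r z x}, fun x y ↦ ⟨rank_lt x y, fun h ↦ ?_⟩⟩
  rcases trichotomous_of r x y with hxy | rfl | hyx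
  · exact hxy
  · exact absurd h (lt_irrefl _)
  · exact absurd (rank_lt y x hyx) h.not_gt

def IsScoreConsistent {ι κ α : Type*} [LinearOrder α] (A : ι → κ → Bool) (p : ι → α)
    (q : κ → α) : Prop :=
  ∀ i j a b, p i ≤ p j → q a ≤ q b → A i b = true → A j a = true → A i a = true

theorem IsVCCI.exists_isScoreConsistent {n m : ℕ} {A : Fin n → Fin m → Bool} (h : IsVCCI A) :
    ∃ (p : Fin n → ℝ) (q : Fin m → ℝ), IsScoreConsistent A p q := by
  obtain ⟨L, R, l, r, -, -, hA⟩ := h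
  refine ⟨L, r, fun i j a b hij hab hib hja ↦ ?_⟩
  rw [hA] at hib hja ⊢
  exact ⟨hij.trans hja.1, hab.trans hib.2⟩

theorem IsScoreConsistent.isLC {n m : ℕ} {α : Type*} [LinearOrder α] {A : Fin n → Fin m → Bool}
    {p : Fin n → α} {q : Fin m → α} (h : IsScoreConsistent A p q) : IsLC A := by
  let key : Fin n ⊕ Fin m → α ×ₗ (Fin n ⊕ₗ Fin m) := fun x ↦ toLex (Sum.elim p q x, toLex x)
  have key_injective : key.Injective := fun x y hxy ↦ by
    simpa [key] using congrArg (fun k ↦ (ofLex k).2) hxy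
  refine ⟨(· < ·) on key, key_injective.isStrictTotalOrder_onFun (r := (· < ·)), ?_⟩
  intro i j a b hij hab
  exact h i j a b (Prod.Lex.monotone_fst _ _ hij.le) (Prod.Lex.monotone_fst _ _ hab.le)

theorem IsLC.exists_isScoreConsistent {n m : ℕ} {A : Fin n → Fin m → Bool} (h : IsLC A) :
    ∃ (p : Fin n → ℕ) (q : Fin m → ℕ), IsScoreConsistent A p q := by
  obtain ⟨r, hr, hA⟩ := h
  obtain ⟨f, hf⟩ := exists_nat_rank r
  have eq_or_rel : ∀ x y, f x ≤ f y → x = y ∨ r x y := fun x y hxy ↦ by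
    rcases trichotomous_of r x y with h | h | h
    · exact .inr h
    · exact .inl h
    · exact absurd ((hf y x).1 h) hxy.not_gt
  refine ⟨f ∘ Sum.inl, f ∘ Sum.inr, fun i j a b hij hab hib hja ↦ ?_⟩
  rcases eq_or_rel _ _ hij with hij | hij
  · cases Sum.inl_injective hij; exact hja
  rcases eq_or_rel _ _ hab with hab | hab
  · cases Sum.inr_injective hab; exact hib
  exact hA i j a b hij hab hib hja

theorem IsScoreConsistent.isVCCI {n m : ℕ} {A : Fin n → Fin m → Bool} {p : Fin n → ℕ}
    {q : Fin m → ℕ} (h : IsScoreConsistent A p q) : IsVCCI A := by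
  classical
  -- The shifts put every row start above `0`, the value of an empty `sup`, and below every
  -- column end: a column approved by nobody then lies in no row, and a row approving nothing
  -- contains no column.
  let L : Fin n → ℕ := fun i ↦ p i + 1
  let K : ℕ := univ.sup L
  let r : Fin m → ℕ := fun c ↦ K + 1 + q c
  let l : Fin m → ℕ := fun c ↦ ({j | A j c = true} : Finset (Fin n)).sup L
  let R : Fin n → ℕ := fun i ↦ L i ⊔ ({c | A i c = true} : Finset (Fin m)).sup r
  have L_lt_r : ∀ i c, L i < r c := fun i c ↦ by
    have : L i ≤ K := le_sup (mem_univ i)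
    show L i < K + 1 + q c
    omega
  refine ⟨fun i ↦ L i, fun i ↦ R i, fun c ↦ l c, fun c ↦ r c, fun i ↦ ?_, fun c ↦ ?_,
    fun i c ↦ ?_⟩
  · exact Nat.cast_le.2 le_sup_left
  · have : l c ≤ K := sup_mono (filter_subset _ _)
    exact Nat.cast_le.2 (this.trans (by simp only [r]; omega))
  simp only [Nat.cast_le]
  constructor
  · intro hic
    exact ⟨le_sup (by simpa using hic), le_sup_of_le_right (le_sup (by simpa using hic))⟩
  rintro ⟨hl, hr⟩
  obtain ⟨j, hj, hij⟩ := (Finset.le_sup_iff (by simp [L])).1 hl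
  obtain ⟨b, hb, hcb⟩ := (Finset.le_sup_iff (by simp [r])).1
    ((le_sup_iff.1 hr).resolve_left (L_lt_r i c).not_ge)
  exact h i j c b (by simpa [L] using hij) (by simpa [r] using hcb) (by simpa using hb)
    (by simpa using hj)

/-- The linearly consistent matrices are exactly the voter-contains-candidate-interval
matrices. -/
theorem lc_iff_vcci {n m : ℕ} (A : Fin n → Fin m → Bool) : IsLC A ↔ IsVCCI A := by
  constructor
  · intro hLC
    obtain ⟨p, q, hpq⟩ := hLC.exists_isScoreConsistent
    exact hpq.isVCCI
  · intro hVCCI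
    obtain ⟨p, q, hpq⟩ := hVCCI.exists_isScoreConsistent
    exact hpq.isLC
end

section
/- Let A be a 0-1 matrix admitting a 1D voter-candidate interval explanation, with rows and columns ordered by increasing left endpoints, and with 0-entries labeled L/R as in the structure lemma (L-entries have only L-labeled 0s to their right in the row; R-entries have only R-labeled 0s below them in the column). Then for any rows i, j and columns a, b with A[i][a] = 1, A[i][b] = 0, A[j][a] = 0, A[j][b] = 1, the 0-entries at positions (i,b) and (j,a) must receive different labels. -/
/-! If both zeros were labeled `L`, the one lying in the earlier of the columns `a`, `b` would force
a zero further right in its row, where the pattern has a one. Dually, two `R` labels force a zero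
below the one in the earlier of the rows `i`, `j`. -/

theorem not_lab_eq_true_and_lab_eq_true_of_cross {ι κ : Type*} [LinearOrder κ]
    {A lab : ι → κ → Bool}
    (hL : ∀ i c, A i c = false → lab i c = true → ∀ c', c < c' → A i c' = false)
    {i j : ι} {a b : κ}
    (hia : A i a = true) (hib : A i b = false) (hja : A j a = false) (hjb : A j b = true) :
    ¬(lab i b = true ∧ lab j a = true) := by
  rintro ⟨hlib, hlja⟩
  rcases lt_trichotomy a b with hab | rfl | hba
  · simp [hL j a hja hlja b hab] at hjb
  · simp [hia] at hib
  · simp [hL i b hib hlib a hba] at hia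

theorem not_lab_eq_false_and_lab_eq_false_of_cross {ι κ : Type*} [LinearOrder ι]
    {A lab : ι → κ → Bool}
    (hR : ∀ i c, A i c = false → lab i c = false → ∀ i', i < i' → A i' c = false)
    {i j : ι} {a b : κ}
    (hia : A i a = true) (hib : A i b = false) (hja : A j a = false) (hjb : A j b = true) :
    ¬(lab i b = false ∧ lab j a = false) := by
  -- an `R`-labeling of `A` is an `L`-labeling of the transpose with the labels negated
  have := not_lab_eq_true_and_lab_eq_true_of_cross (A := fun c i => A i c)
    (lab := fun c i => !lab i c) (fun c i hci hl i' hi => hR i c hci (by simpa using hl) i' hi)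
    hia hja hib hjb
  simpa [and_comm] using this

theorem labels_differ_in_2x2_general {n m : ℕ} (A : Fin n → Fin m → Bool)
    (lab : Fin n → Fin m → Bool)
    (hL : ∀ i c, A i c = false → lab i c = true →
      ∀ c', c < c' → A i c' = false ∧ lab i c' = true)
    (hR : ∀ i c, A i c = false → lab i c = false →
      ∀ i', i < i' → A i' c = false ∧ lab i' c = false)
    (i j : Fin n) (a b : Fin m)
    (hia : A i a = true) (hib : A i b = false) (hja : A j a = false) (hjb : A j b = true) :
    lab i b ≠ lab j a := by
  intro h
  cases hlab : lab i b
  · exact not_lab_eq_false_and_lab_eq_false_of_cross (fun i c hz hl i' hi => (hR i c hz hl i' hi).1)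
      hia hib hja hjb ⟨hlab, h ▸ hlab⟩
  · exact not_lab_eq_true_and_lab_eq_true_of_cross (fun i c hz hl c' hc => (hL i c hz hl c' hc).1)
      hia hib hja hjb ⟨hlab, h ▸ hlab⟩

/-- Let `A` be VCI with rows and columns ordered by increasing left endpoints of their
intervals, and let the `0`-entries be labeled `L` (encoded `true`) / `R` (encoded `false`)
as in the structure lemma. Then in every `2×2` pattern `A[i][a] = 1`, `A[i][b] = 0`,
`A[j][a] = 0`, `A[j][b] = 1`, the two `0`-entries receive different labels. -/
theorem labels_differ_in_2x2 {n m : ℕ} (A : Fin n → Fin m → Bool)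
    (vl vr : Fin n → ℝ) (cl cr : Fin m → ℝ)
    (hv : ∀ i, vl i ≤ vr i) (hc : ∀ j, cl j ≤ cr j)
    (hA : ∀ i j, A i j = true ↔ (Set.Icc (vl i) (vr i) ∩ Set.Icc (cl j) (cr j)).Nonempty)
    (hvmono : Monotone vl) (hcmono : Monotone cl)
    (lab : Fin n → Fin m → Bool)
    (hL : ∀ i c, A i c = false → lab i c = true →
      ∀ c', c < c' → A i c' = false ∧ lab i c' = true)
    (hR : ∀ i c, A i c = false → lab i c = false →
      ∀ i', i < i' → A i' c = false ∧ lab i' c = false)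
    (i j : Fin n) (a b : Fin m)
    (hia : A i a = true) (hib : A i b = false) (hja : A j a = false) (hjb : A j b = true) :
    lab i b ≠ lab j a :=
  labels_differ_in_2x2_general A lab hL hR i j a b hia hib hja hjb
end

section
/- In the domination-shifting procedure on x ∈ [0,1]^m where at each step one picks a feasible recipient-donor pair {j, j'} (j dominates j', x_j < 1, x_{j'} > 0) maximizing |N_j \ N_{j'}|, and shifts δ = min(1 - x_j, x_{j'}) from x_{j'} to x_j, each iteration strictly decreases the total number of feasible recipient-donor pairs; hence the procedure terminates after at most m² iterations. -/
/-!
After the step, either `j` is saturated (`x j = 1`) or `j'` is emptied (`x j' = 0`), so `(j, j')`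
stops being feasible. A pair can only become feasible by `j'` leaving the value `1`, which forces
`x j` to reach `1`, or by `j` leaving the value `0`, which forces `x j'` to reach `0`. Swapping
`j` and `j'` in both coordinates then sends each new pair `(j', b)` to `(j, b)` and each new pair
`(a, j)` to `(a, j')`, pairs that were feasible before and are not afterwards, injectively and
never onto `(j, j')`.
-/

/-- The set of feasible recipient-donor pairs `(j, j')`: `j` dominates `j'`,
`x j < 1` and `x j' > 0`. -/
noncomputable def feasiblePairs {n m : ℕ} (N : Fin m → Finset (Fin n)) (x : Fin m → ℝ) :
    Finset (Fin m × Fin m) :=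
  Finset.univ.filter (fun p => N p.2 ⊂ N p.1 ∧ x p.1 < 1 ∧ 0 < x p.2)

open Finset Function

noncomputable def shift {ι : Type*} [DecidableEq ι] (x : ι → ℝ) (i i' : ι) : ι → ℝ :=
  update (update x i (x i + min (1 - x i) (x i'))) i' (x i' - min (1 - x i) (x i'))

section Shift

variable {ι : Type*} [DecidableEq ι] {x : ι → ℝ} {i i' : ι}

theorem shift_apply_of_ne {a : ι} (hi : a ≠ i) (hi' : a ≠ i') : shift x i i' a = x a := by
  rw [shift, update_of_ne hi', update_of_ne hi]

theorem shift_apply_left_eq_one (hii' : i ≠ i') (h : 1 - x i ≤ x i') : shift x i i' i = 1 := by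
  rw [shift, update_of_ne hii', update_self, min_eq_left h]
  ring

theorem shift_apply_right_eq_zero (h : x i' ≤ 1 - x i) : shift x i i' i' = 0 := by
  rw [shift, update_self, min_eq_right h]
  ring

end Shift

section FeasiblePairs

variable {n m : ℕ} {N : Fin m → Finset (Fin n)} {x y : Fin m → ℝ} {j j' : Fin m}
  {p : Fin m × Fin m}

theorem mem_feasiblePairs : p ∈ feasiblePairs N x ↔ N p.2 ⊂ N p.1 ∧ x p.1 < 1 ∧ 0 < x p.2 := by
  simp [feasiblePairs]

theorem card_feasiblePairs_le : #(feasiblePairs N x) ≤ m * m := by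
  calc #(feasiblePairs N x) ≤ #(univ : Finset (Fin m × Fin m)) := card_filter_le _ _
    _ = m * m := by simp

theorem ne_of_mem_feasiblePairs (h : (j, j') ∈ feasiblePairs N x) : j ≠ j' := by
  rintro rfl
  exact ssubset_irrefl _ (mem_feasiblePairs.1 h).1

theorem eq_of_mem_feasiblePairs_sdiff (hjj' : (j, j') ∈ feasiblePairs N x)
    (hy : ∀ a, a ≠ j → a ≠ j' → y a = x a) (hp : p ∈ feasiblePairs N y \ feasiblePairs N x) :
    p.1 = j' ∧ 1 ≤ x j' ∨ p.2 = j ∧ x j ≤ 0 := by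
  obtain ⟨-, hxj, hxj'⟩ := mem_feasiblePairs.1 hjj'
  obtain ⟨hpy, hpx⟩ := mem_sdiff.1 hp
  obtain ⟨hN, hy1, hy2⟩ := mem_feasiblePairs.1 hpy
  have hx : 1 ≤ x p.1 ∨ x p.2 ≤ 0 := by
    by_contra! h
    exact hpx (mem_feasiblePairs.2 ⟨hN, h.1, h.2⟩)
  rcases hx with hx | hx
  · have hp1 : p.1 = j' := by
      by_contra hne
      have hpj : p.1 ≠ j := by rintro rfl; linarith
      linarith [hy p.1 hpj hne]
    exact Or.inl ⟨hp1, hp1 ▸ hx⟩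
  · have hp2 : p.2 = j := by
      by_contra hne
      have hpj' : p.2 ≠ j' := by rintro rfl; linarith
      linarith [hy p.2 hne hpj']
    exact Or.inr ⟨hp2, hp2 ▸ hx⟩

theorem swap_mem_feasiblePairs_sdiff_shift (hj : 0 ≤ x j) (hj' : x j' ≤ 1)
    (hjj' : (j, j') ∈ feasiblePairs N x)
    (hp : p ∈ feasiblePairs N (shift x j j') \ feasiblePairs N x) :
    (Equiv.swap j j' p.1, Equiv.swap j j' p.2) ∈
      (feasiblePairs N x \ feasiblePairs N (shift x j j')).erase (j, j') := by
  obtain ⟨hNjj', hxj, hxj'⟩ := mem_feasiblePairs.1 hjj'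
  have hjne := ne_of_mem_feasiblePairs hjj'
  obtain ⟨hN, hy1, hy2⟩ := mem_feasiblePairs.1 (mem_sdiff.1 hp).1
  rcases eq_of_mem_feasiblePairs_sdiff hjj' (fun _ => shift_apply_of_ne) hp with
    ⟨h1, hxj'1⟩ | ⟨h2, hxj0⟩
  · rw [h1] at hN
    have hbj' : p.2 ≠ j' := fun h => ssubset_irrefl _ (h ▸ hN)
    have hbj : p.2 ≠ j := fun h => ssubset_irrefl _ (h ▸ hN.trans hNjj')
    have hsat : shift x j j' j = 1 := shift_apply_left_eq_one hjne (by linarith)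
    rw [h1, Equiv.swap_apply_right, Equiv.swap_apply_of_ne_of_ne hbj hbj']
    refine mem_erase.2 ⟨by simp [hbj'], mem_sdiff.2 ⟨?_, ?_⟩⟩
    · rw [shift_apply_of_ne hbj hbj'] at hy2
      exact mem_feasiblePairs.2 ⟨hN.trans hNjj', hxj, hy2⟩
    · simp [mem_feasiblePairs, hsat]
  · rw [h2] at hN
    have haj : p.1 ≠ j := fun h => ssubset_irrefl _ (h ▸ hN)
    have haj' : p.1 ≠ j' := fun h => ssubset_irrefl _ (h ▸ hNjj'.trans hN)
    have hempty : shift x j j' j' = 0 := shift_apply_right_eq_zero (by linarith)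
    rw [h2, Equiv.swap_apply_left, Equiv.swap_apply_of_ne_of_ne haj haj']
    refine mem_erase.2 ⟨by simp [haj], mem_sdiff.2 ⟨?_, ?_⟩⟩
    · rw [shift_apply_of_ne haj haj'] at hy1
      exact mem_feasiblePairs.2 ⟨hNjj'.trans hN, hy1, hxj'⟩
    · simp [mem_feasiblePairs, hempty]

theorem card_feasiblePairs_shift_lt (hj : 0 ≤ x j) (hj' : x j' ≤ 1)
    (hjj' : (j, j') ∈ feasiblePairs N x) :
    #(feasiblePairs N (shift x j j')) < #(feasiblePairs N x) := by
  have hjj'_sdiff : (j, j') ∈ feasiblePairs N x \ feasiblePairs N (shift x j j') := by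
    have hjne := ne_of_mem_feasiblePairs hjj'
    refine mem_sdiff.2 ⟨hjj', fun h => ?_⟩
    obtain ⟨-, h1, h2⟩ := mem_feasiblePairs.1 h
    rcases le_total (1 - x j) (x j') with hle | hle
    · exact h1.ne (shift_apply_left_eq_one hjne hle)
    · exact h2.ne' (shift_apply_right_eq_zero hle)
  rw [← card_sdiff_lt_card_sdiff_iff]
  calc #(feasiblePairs N (shift x j j') \ feasiblePairs N x)
      ≤ #((feasiblePairs N x \ feasiblePairs N (shift x j j')).erase (j, j')) :=
        card_le_card_of_injOn (fun p => (Equiv.swap j j' p.1, Equiv.swap j j' p.2))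
          (fun _ hp => swap_mem_feasiblePairs_sdiff_shift hj hj' hjj' hp)
          ((Equiv.prodCongr (Equiv.swap j j') (Equiv.swap j j')).injective.injOn)
    _ < _ := card_erase_lt_of_mem hjj'_sdiff

end FeasiblePairs

theorem shift_step_decreases_pairs_general {n m : ℕ} (N : Fin m → Finset (Fin n))
    (x : Fin m → ℝ) (hx : ∀ t, x t ∈ Set.Icc (0 : ℝ) 1)
    (j j' : Fin m) (hfeas : (j, j') ∈ feasiblePairs N x)
    (δ : ℝ) (hδ : δ = min (1 - x j) (x j'))
    (x' : Fin m → ℝ)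
    (hx' : x' = Function.update (Function.update x j (x j + δ)) j' (x j' - δ)) :
    (feasiblePairs N x').card < (feasiblePairs N x).card ∧
    (feasiblePairs N x).card ≤ m * m := by
  subst hδ hx'
  exact ⟨card_feasiblePairs_shift_lt (hx j).1 (hx j').2 hfeas, card_feasiblePairs_le⟩

/-- One shift step on a feasible recipient-donor pair maximizing `|N j \ N j'|` strictly
decreases the number of feasible pairs; since there are at most `m²` pairs, the procedure
terminates after at most `m²` iterations. -/
theorem shift_step_decreases_pairs {n m : ℕ} (N : Fin m → Finset (Fin n))
    (x : Fin m → ℝ) (hx : ∀ t, x t ∈ Set.Icc (0 : ℝ) 1)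
    (j j' : Fin m) (hfeas : (j, j') ∈ feasiblePairs N x)
    (hmax : ∀ p ∈ feasiblePairs N x, (N p.1 \ N p.2).card ≤ (N j \ N j').card)
    (δ : ℝ) (hδ : δ = min (1 - x j) (x j'))
    (x' : Fin m → ℝ)
    (hx' : x' = Function.update (Function.update x j (x j + δ)) j' (x j' - δ)) :
    (feasiblePairs N x').card < (feasiblePairs N x).card ∧
    (feasiblePairs N x).card ≤ m * m :=
  shift_step_decreases_pairs_general N x hx j j' hfeas δ hδ x' hx'
end

section
/- Consider the LP: maximize Σ_{i=1}^n Σ_{ℓ=1}^k w^i_ℓ y^i_ℓ subject to Σ_j x_j = k, Σ_{j ∈ C_i} x_j = Σ_ℓ y^i_ℓ for all i, and 0 ≤ x_j, y^i_ℓ ≤ 1. If all weights are strictly positive (w^i_ℓ > 0 for all i, ℓ) and (x, y) is an optimal solution, then there is no pair of candidates j, j' with x_j < 1, x_{j'} > 0, and j dominating j' (N_{j'} ⊊ N_j). -/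
/-!
Shift mass `ε = min (1 - x j) (x j')` from `j'` to `j`. Only voters approving `j` but not `j'`
see their coverage change, and it grows by `ε`; since such a voter does not approve `j'`, its
slack `k - ∑ ℓ, y i ℓ` is at least `x j' ≥ ε`, so the extra `ε` can be spread over its slots in
proportion to their slack. This keeps the solution feasible, and by domination some voter is
of this kind, so with positive weights the objective strictly increases.
-/

open Finset

section Slack

variable {κ : Type*} [Fintype κ]

def slack (y : κ → ℝ) : ℝ := ∑ ℓ, (1 - y ℓ)

noncomputable def spreadOverSlack (ε : ℝ) (y : κ → ℝ) : κ → ℝ :=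
  fun ℓ => y ℓ + ε / slack y * (1 - y ℓ)

lemma spreadOverSlack_mem_Icc {ε : ℝ} {y : κ → ℝ} (hy : ∀ ℓ, y ℓ ∈ Set.Icc (0 : ℝ) 1)
    (hε : 0 ≤ ε) (hεslack : ε ≤ slack y) (ℓ : κ) :
    spreadOverSlack ε y ℓ ∈ Set.Icc (0 : ℝ) 1 := by
  have ht₀ : 0 ≤ ε / slack y := div_nonneg hε (hε.trans hεslack)
  have ht₁ : ε / slack y ≤ 1 := div_le_one_of_le₀ hεslack (hε.trans hεslack)
  obtain ⟨hy₀, hy₁⟩ := hy ℓ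
  constructor <;> simp only [spreadOverSlack] <;> nlinarith

lemma sum_spreadOverSlack {ε : ℝ} {y : κ → ℝ} (hslack : slack y ≠ 0) :
    ∑ ℓ, spreadOverSlack ε y ℓ = ∑ ℓ, y ℓ + ε := by
  calc ∑ ℓ, spreadOverSlack ε y ℓ = ∑ ℓ, y ℓ + ε / slack y * slack y := by
        simp only [spreadOverSlack, sum_add_distrib, ← mul_sum, slack]
    _ = ∑ ℓ, y ℓ + ε := by rw [div_mul_cancel₀ ε hslack]

lemma sum_mul_lt_sum_mul_spreadOverSlack {ε : ℝ} {y w : κ → ℝ} (hw : ∀ ℓ, 0 < w ℓ)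
    (hy : ∀ ℓ, y ℓ ≤ 1) (hε : 0 < ε) (hslack : 0 < slack y) :
    ∑ ℓ, w ℓ * y ℓ < ∑ ℓ, w ℓ * spreadOverSlack ε y ℓ := by
  obtain ⟨ℓ₀, -, hℓ₀⟩ : ∃ ℓ ∈ univ, 0 < 1 - y ℓ :=
    exists_lt_of_sum_lt (f := fun _ => (0 : ℝ)) (by rw [sum_const_zero]; exact hslack)
  have ht : 0 < ε / slack y := div_pos hε hslack
  refine sum_lt_sum (fun ℓ _ => ?_) ⟨ℓ₀, mem_univ _, ?_⟩
  · have := hy ℓ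
    gcongr
    · exact (hw ℓ).le
    simp only [spreadOverSlack]
    nlinarith
  · gcongr
    · exact hw ℓ₀
    simp only [spreadOverSlack]
    nlinarith

end Slack

section Transfer

variable {α M : Type*} [DecidableEq α]

lemma sum_add_le_sum_of_notMem [Fintype α] [AddCommMonoid M] [PartialOrder M]
    [IsOrderedAddMonoid M] {x : α → M} (hx : ∀ j, 0 ≤ x j) {s : Finset α} {j : α}
    (hj : j ∉ s) : ∑ i ∈ s, x i + x j ≤ ∑ i, x i := by
  rw [add_comm, ← sum_insert hj]
  exact sum_le_univ_sum_of_nonneg hx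

lemma sum_add_single_sub_single [AddCommGroup M] (x : α → M) (j j' : α) (ε : M)
    (s : Finset α) : ∑ i ∈ s, (x + Pi.single j ε - Pi.single j' ε : α → M) i =
      ∑ i ∈ s, x i + (if j ∈ s then ε else 0) - (if j' ∈ s then ε else 0) := by
  simp only [Pi.sub_apply, Pi.add_apply, sum_sub_distrib, sum_add_distrib, sum_pi_single']

lemma add_single_sub_single_mem_Icc {x : α → ℝ} (hx : ∀ i, x i ∈ Set.Icc (0 : ℝ) 1)
    {j j' : α} (hne : j ≠ j') {ε : ℝ} (hε : 0 ≤ ε) (hεj : ε ≤ 1 - x j) (hεj' : ε ≤ x j')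
    (i : α) : (x + Pi.single j ε - Pi.single j' ε : α → ℝ) i ∈ Set.Icc (0 : ℝ) 1 := by
  obtain ⟨hx₀, hx₁⟩ := hx i
  simp only [Pi.sub_apply, Pi.add_apply]
  rcases eq_or_ne i j with rfl | hij
  · simp only [Pi.single_eq_same, Pi.single_eq_of_ne hne]
    constructor <;> linarith
  rcases eq_or_ne i j' with rfl | hij'
  · simp only [Pi.single_eq_same, Pi.single_eq_of_ne hij]
    constructor <;> linarith
  · simpa [Pi.single_eq_of_ne hij, Pi.single_eq_of_ne hij'] using hx i

end Transfer

section ThieleLP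

variable {ι α κ : Type*} [Fintype α] [Fintype κ]

/-- Feasibility in the Thiele LP, with the committee size encoded as `Fintype.card κ`, the number
of slots `ℓ` of each voter. -/
structure IsFeasible (C : ι → Finset α) (x : α → ℝ) (y : ι → κ → ℝ) : Prop where
  x_mem : ∀ j, x j ∈ Set.Icc (0 : ℝ) 1
  y_mem : ∀ i ℓ, y i ℓ ∈ Set.Icc (0 : ℝ) 1
  sum_x : ∑ j, x j = Fintype.card κ
  coverage : ∀ i, ∑ j ∈ C i, x j = ∑ ℓ, y i ℓ

variable {C : ι → Finset α} {x : α → ℝ} {y : ι → κ → ℝ}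

lemma IsFeasible.le_slack [DecidableEq α] (hf : IsFeasible C x y) {i : ι} {j : α}
    (hj : j ∉ C i) : x j ≤ slack (y i) := by
  have hslack : slack (y i) = ∑ j, x j - ∑ j ∈ C i, x j := by
    simp [slack, sum_sub_distrib, hf.sum_x, hf.coverage]
  have := sum_add_le_sum_of_notMem (fun j => (hf.x_mem j).1) hj
  linarith

variable [DecidableEq α]

lemma IsFeasible.transfer (hf : IsFeasible C x y) {j j' : α} (hne : j ≠ j') {ε : ℝ}
    (hε : 0 < ε) (hεj : ε ≤ 1 - x j) (hεj' : ε ≤ x j') (hsub : ∀ i, j' ∈ C i → j ∈ C i) :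
    IsFeasible C (x + Pi.single j ε - Pi.single j' ε)
      (fun i => if j ∈ C i ∧ j' ∉ C i then spreadOverSlack ε (y i) else y i) where
  x_mem := add_single_sub_single_mem_Icc hf.x_mem hne hε.le hεj hεj'
  y_mem i ℓ := by
    split_ifs with hi
    · exact spreadOverSlack_mem_Icc (hf.y_mem i) hε.le (hεj'.trans (hf.le_slack hi.2)) ℓ
    · exact hf.y_mem i ℓ
  sum_x := by rw [sum_add_single_sub_single]; simp [hf.sum_x]
  coverage i := by
    rw [sum_add_single_sub_single, hf.coverage]
    by_cases hj : j ∈ C i <;> by_cases hj' : j' ∈ C i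
    · simp [hj, hj']
    · have hslack := (hε.trans_le (hεj'.trans (hf.le_slack hj'))).ne'
      simp [hj, hj', sum_spreadOverSlack hslack]
    · exact absurd (hsub i hj') hj
    · simp [hj, hj']

lemma IsFeasible.exists_objective_lt [Fintype ι] (hf : IsFeasible C x y) {w : ι → κ → ℝ}
    (hw : ∀ i ℓ, 0 < w i ℓ) {j j' : α} (hxj : x j < 1) (hxj' : 0 < x j')
    (hdom : univ.filter (fun i => j' ∈ C i) ⊂ univ.filter (fun i => j ∈ C i)) :
    ∃ x' y', IsFeasible C x' y' ∧
      ∑ i, ∑ ℓ, w i ℓ * y i ℓ < ∑ i, ∑ ℓ, w i ℓ * y' i ℓ := by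
  have hsub : ∀ i, j' ∈ C i → j ∈ C i := fun i hi => by
    simpa using hdom.subset (mem_filter.2 ⟨mem_univ i, hi⟩)
  obtain ⟨i₀, hi₀, hi₀'⟩ : ∃ i, j ∈ C i ∧ j' ∉ C i := by
    obtain ⟨i, hi, hi'⟩ := exists_of_ssubset hdom
    exact ⟨i, by simpa using hi, by simpa using hi'⟩
  have hne : j ≠ j' := fun h => hi₀' (h ▸ hi₀)
  set ε := min (1 - x j) (x j')
  have hε : 0 < ε := lt_min (by linarith) hxj'
  have hεj' : ε ≤ x j' := min_le_right _ _
  have hraise : ∀ i, j' ∉ C i →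
      ∑ ℓ, w i ℓ * y i ℓ < ∑ ℓ, w i ℓ * spreadOverSlack ε (y i) ℓ := fun i hi =>
    sum_mul_lt_sum_mul_spreadOverSlack (hw i) (fun ℓ => (hf.y_mem i ℓ).2) hε
      (hε.trans_le (hεj'.trans (hf.le_slack hi)))
  refine ⟨_, _, hf.transfer hne hε (min_le_left _ _) hεj' hsub,
    sum_lt_sum (fun i _ => ?_) ⟨i₀, mem_univ _, ?_⟩⟩
  · split_ifs with hi
    · exact (hraise i hi.2).le
    · rfl
  · simpa only [hi₀, hi₀', not_false_eq_true, and_self, if_true] using hraise i₀ hi₀'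

end ThieleLP

theorem optimal_has_no_domination_pair_general {n m k : ℕ} (C : Fin n → Finset (Fin m))
    (w : Fin n → Fin k → ℝ)
    (hwpos : ∀ i ℓ, 0 < w i ℓ)
    (x : Fin m → ℝ) (y : Fin n → Fin k → ℝ)
    (hx : ∀ j, x j ∈ Set.Icc (0 : ℝ) 1)
    (hy : ∀ i ℓ, y i ℓ ∈ Set.Icc (0 : ℝ) 1)
    (hk : ∑ j, x j = k)
    (hcons : ∀ i, ∑ j ∈ C i, x j = ∑ ℓ, y i ℓ)
    (hopt : ∀ (x' : Fin m → ℝ) (y' : Fin n → Fin k → ℝ),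
      (∀ j, x' j ∈ Set.Icc (0 : ℝ) 1) → (∀ i ℓ, y' i ℓ ∈ Set.Icc (0 : ℝ) 1) →
      (∑ j, x' j = k) → (∀ i, ∑ j ∈ C i, x' j = ∑ ℓ, y' i ℓ) →
      ∑ i, ∑ ℓ, w i ℓ * y' i ℓ ≤ ∑ i, ∑ ℓ, w i ℓ * y i ℓ) :
    ¬ ∃ j j' : Fin m, x j < 1 ∧ 0 < x j' ∧
      (Finset.univ.filter (fun i => j' ∈ C i)) ⊂ (Finset.univ.filter (fun i => j ∈ C i)) := by
  rintro ⟨j, j', hxj, hxj', hdom⟩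
  have hf : IsFeasible C x y := ⟨hx, hy, by simpa using hk, hcons⟩
  obtain ⟨x', y', hf', hlt⟩ := hf.exists_objective_lt hwpos hxj hxj' hdom
  exact (hopt x' y' hf'.x_mem hf'.y_mem (by simpa using hf'.sum_x) hf'.coverage).not_gt hlt

/-- In an optimal solution of the Thiele LP with strictly positive (nonincreasing) weights,
no candidate with `x j < 1` dominates a candidate with `x j' > 0`. -/
theorem optimal_has_no_domination_pair {n m k : ℕ} (C : Fin n → Finset (Fin m))
    (w : Fin n → Fin k → ℝ)
    (hwpos : ∀ i ℓ, 0 < w i ℓ)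
    (hwmono : ∀ i : Fin n, ∀ ℓ ℓ' : Fin k, ℓ ≤ ℓ' → w i ℓ' ≤ w i ℓ)
    (x : Fin m → ℝ) (y : Fin n → Fin k → ℝ)
    (hx : ∀ j, x j ∈ Set.Icc (0 : ℝ) 1)
    (hy : ∀ i ℓ, y i ℓ ∈ Set.Icc (0 : ℝ) 1)
    (hk : ∑ j, x j = k)
    (hcons : ∀ i, ∑ j ∈ C i, x j = ∑ ℓ, y i ℓ)
    (hopt : ∀ (x' : Fin m → ℝ) (y' : Fin n → Fin k → ℝ),
      (∀ j, x' j ∈ Set.Icc (0 : ℝ) 1) → (∀ i ℓ, y' i ℓ ∈ Set.Icc (0 : ℝ) 1) →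
      (∑ j, x' j = k) → (∀ i, ∑ j ∈ C i, x' j = ∑ ℓ, y' i ℓ) →
      ∑ i, ∑ ℓ, w i ℓ * y' i ℓ ≤ ∑ i, ∑ ℓ, w i ℓ * y i ℓ) :
    ¬ ∃ j j' : Fin m, x j < 1 ∧ 0 < x j' ∧
      (Finset.univ.filter (fun i => j' ∈ C i)) ⊂ (Finset.univ.filter (fun i => j ∈ C i)) :=
  optimal_has_no_domination_pair_general C w hwpos x y hx hy hk hcons hopt
end

section
/- For the election with approval matrix A having rows (1,1,0,0), (1,0,1,0), (1,0,0,1), committee size k = 2, and all weights zero (w^i_ℓ = 0), the point x = (1/2, 1/2, 1/2, 1/2) with y^i_1 = 1 and y^i_2 = 0 for all voters i is an optimal extreme point (vertex) of the LP { Σ_j x_j = 2, Σ_{j ∈ C_i} x_j = y^i_1 + y^i_2 for each i, all variables in [0,1] }; in particular, this LP has a non-integral optimal extreme point. -/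
/-- Feasibility for the LP of the example: three voters with approval sets
`{0,1}, {0,2}, {0,3}` over four candidates, committee size `2`. -/
def Feas (x : Fin 4 → ℝ) (y : Fin 3 → Fin 2 → ℝ) : Prop :=
  (∀ j, x j ∈ Set.Icc (0 : ℝ) 1) ∧ (∀ i ℓ, y i ℓ ∈ Set.Icc (0 : ℝ) 1) ∧
  (∑ j, x j = 2) ∧ (∀ i : Fin 3, x 0 + x i.succ = y i 0 + y i 1)

/-- The fractional point of the example. -/
noncomputable def px : Fin 4 → ℝ := fun _ => 1 / 2

/-- The `y`-part of the fractional point of the example. -/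
def py : Fin 3 → Fin 2 → ℝ := fun _ ℓ => if ℓ = 0 then 1 else 0

/-! The vertex argument: each `y i ℓ` of `py` sits at an end of `[0, 1]`, so it is shared by
any two feasible points it is a proper convex combination of; and once `y = py`, the equality
constraints read `x 0 + x j = 1` for `j = 1, 2, 3` and `∑ j, x j = 2`, whose only solution is
`x = px`. -/

section ConvexCombination

variable {𝕜 : Type*} [Field 𝕜] [LinearOrder 𝕜] [IsStrictOrderedRing 𝕜] {a b c t : 𝕜}

lemma eq_of_le_of_convex_comb_eq (ha : a ≤ c) (hb : b ≤ c) (ht₀ : 0 < t) (ht₁ : t < 1)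
    (h : c = t * a + (1 - t) * b) : a = c ∧ b = c := by
  constructor <;> nlinarith

lemma eq_of_ge_of_convex_comb_eq (ha : c ≤ a) (hb : c ≤ b) (ht₀ : 0 < t) (ht₁ : t < 1)
    (h : c = t * a + (1 - t) * b) : a = c ∧ b = c := by
  constructor <;> nlinarith

end ConvexCombination

lemma feas_px_py : Feas px py := by
  refine ⟨fun j => ?_, fun i ℓ => ?_, ?_, fun i => ?_⟩
  · norm_num [px]
  · fin_cases ℓ <;> simp [py]
  · norm_num [Fin.sum_univ_four, px]
  · norm_num [px, py]

lemma Feas.eq_px_of_eq_py {x : Fin 4 → ℝ} (h : Feas x py) : x = px := by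
  obtain ⟨-, -, hsum, hrow⟩ := h
  have h₁ : x 0 + x 1 = 1 := by simpa [py] using hrow 0
  have h₂ : x 0 + x 2 = 1 := by simpa [py] using hrow 1
  have h₃ : x 0 + x 3 = 1 := by simpa [py] using hrow 2
  rw [Fin.sum_univ_four] at hsum
  funext j
  fin_cases j <;> simp [px] <;> linarith

lemma eq_py_of_convex_comb_eq_py {x₁ x₂ : Fin 4 → ℝ} {y₁ y₂ : Fin 3 → Fin 2 → ℝ} {t : ℝ}
    (h₁ : Feas x₁ y₁) (h₂ : Feas x₂ y₂) (ht₀ : 0 < t) (ht₁ : t < 1)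
    (hy : ∀ i ℓ, py i ℓ = t * y₁ i ℓ + (1 - t) * y₂ i ℓ) : y₁ = py ∧ y₂ = py := by
  have key : ∀ i ℓ, y₁ i ℓ = py i ℓ ∧ y₂ i ℓ = py i ℓ := by
    intro i ℓ
    fin_cases ℓ
    · exact eq_of_le_of_convex_comb_eq (h₁.2.1 i 0).2 (h₂.2.1 i 0).2 ht₀ ht₁ (hy i 0)
    · exact eq_of_ge_of_convex_comb_eq (h₁.2.1 i 1).1 (h₂.2.1 i 1).1 ht₀ ht₁ (hy i 1)
  exact ⟨funext₂ fun i ℓ => (key i ℓ).1, funext₂ fun i ℓ => (key i ℓ).2⟩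

/-- With all weights zero, the point `x = (1/2,1/2,1/2,1/2)`, `y^i = (1,0)` is a feasible,
optimal extreme point of the LP, and it is not integral. -/
theorem fractional_optimal_extreme_point :
    Feas px py ∧
    (∀ (x : Fin 4 → ℝ) (y : Fin 3 → Fin 2 → ℝ), Feas x y →
      ∑ i, ∑ ℓ, (0 : ℝ) * y i ℓ ≤ ∑ i, ∑ ℓ, (0 : ℝ) * py i ℓ) ∧
    (∀ (x₁ : Fin 4 → ℝ) (y₁ : Fin 3 → Fin 2 → ℝ) (x₂ : Fin 4 → ℝ) (y₂ : Fin 3 → Fin 2 → ℝ)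
      (t : ℝ), Feas x₁ y₁ → Feas x₂ y₂ → 0 < t → t < 1 →
      (∀ j, px j = t * x₁ j + (1 - t) * x₂ j) →
      (∀ i ℓ, py i ℓ = t * y₁ i ℓ + (1 - t) * y₂ i ℓ) →
      x₁ = x₂ ∧ y₁ = y₂) ∧
    (∃ j, px j ≠ 0 ∧ px j ≠ 1) := by
  refine ⟨feas_px_py, fun _ _ _ => by simp, ?_, ⟨0, by norm_num [px]⟩⟩
  intro x₁ y₁ x₂ y₂ t h₁ h₂ ht₀ ht₁ _ hy
  obtain ⟨rfl, rfl⟩ := eq_py_of_convex_comb_eq_py h₁ h₂ ht₀ ht₁ hy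
  exact ⟨h₁.eq_px_of_eq_py.trans h₂.eq_px_of_eq_py.symm, rfl⟩
end

section
/- Given a Set Cover instance (universe [n], sets S_1,...,S_m, integer k), construct the star T with center c and leaves v_1,...,v_m; place candidate j at leaf v_j, and give voter i the substar on {v_j : i ∈ S_j} ∪ {c}. Then there exist k sets covering [n] if and only if there exists a committee W of k candidates such that every voter approves at least one member of W (i.e., Chamberlin–Courant score equals n). -/
theorem Fin.succ_mem_insert_zero_image_succ {m : ℕ} (A : Finset (Fin m)) (j : Fin m) :
    j.succ ∈ insert 0 (A.image Fin.succ) ↔ j ∈ A := by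
  simp [Fin.succ_ne_zero]

/-- Correctness of the star reduction from Set Cover: with the star on vertices
`Fin (m+1)` (center `0`, leaf `j.succ` for each set `S j`), candidate `j`'s subtree the
singleton `{j.succ}`, and voter `i`'s subtree `{j.succ : i ∈ S j} ∪ {0}`, there exist `k`
sets covering the universe iff there is a committee of `k` candidates such that every
voter approves at least one member (Chamberlin–Courant score `n`). -/
theorem star_reduction_correct (n m k : ℕ) (S : Fin m → Finset (Fin n))
    (voterTree : Fin n → Finset (Fin (m + 1)))
    (hVT : ∀ i, voterTree i =
      insert 0 ((Finset.univ.filter (fun j : Fin m => i ∈ S j)).image Fin.succ)) :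
    (∃ F : Finset (Fin m), F.card = k ∧ ∀ i : Fin n, ∃ j ∈ F, i ∈ S j) ↔
    (∃ W : Finset (Fin m), W.card = k ∧
      ∀ i : Fin n, ∃ j ∈ W, Fin.succ j ∈ voterTree i) := by
  have approves_iff (i : Fin n) (j : Fin m) : j.succ ∈ voterTree i ↔ i ∈ S j := by
    rw [hVT, Fin.succ_mem_insert_zero_image_succ, Finset.mem_filter_univ]
  simp only [approves_iff]
end

section
/- Let A be a 0-1 matrix admitting a 1D voter-candidate interval explanation with rows and columns permuted and 0-entries labeled L/R as in the structure lemma. Suppose there exist rows r_1, r_2, r_3, r_4 and columns c_1, c_2, c_3, c_4 such that: entries (r_1,c_4), (r_2,c_4), (r_2,c_3) are 0-entries labeled L and all other entries of rows r_1 and r_2 are 1; entries (r_4,c_1), (r_4,c_2), (r_3,c_2) are 0-entries labeled R and all other entries of columns c_1 and c_2 are 1; row r_3 contains at least two L-labeled entries and column c_3 contains at least two R-labeled entries. Then a contradiction follows; i.e., no VCI matrix admits such a configuration. -/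
/-!
The entry `(r₃, c₃)` is forced to be both an `L`-entry and an `R`-entry. The `L`-entries of a
row form an upper set of columns. Row `r₂` has `L`-entries only at `c₃` and `c₄`, so an
`L`-entry of row `r₃` strictly after `c₃` would, through the `L`-tail of `r₂` starting at `c₃`,
have to be `c₄`; as row `r₃` has two `L`-entries, one of them is at or before `c₃`, and hence
`(r₃, c₃)` is an `L`-entry. The same argument on columns `c₂` and `c₃` makes it an `R`-entry.
-/

theorem IsUpperSet.mem_of_nontrivial_of_subset_pair {ι : Type*} [LinearOrder ι] {s t : Set ι}
    (hs : IsUpperSet s) (ht : IsUpperSet t) {x e : ι} (hx : x ∈ t) (hte : t ⊆ {x, e})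
    (hnt : s.Nontrivial) : x ∈ s := by
  obtain ⟨w, hw, hwe⟩ := hnt.exists_ne e
  rcases le_or_gt w x with hwx | hxw
  · exact hs hwx hw
  · rcases hte (ht hxw.le hx) with rfl | rfl
    · exact absurd hxw (lt_irrefl w)
    · exact absurd rfl hwe

section Labeling

variable {ι κ : Type*} (A lab : ι → κ → Bool)

-- The label `true` encodes `L` and `false` encodes `R`.
def lZeros (i : ι) : Set κ := {c | A i c = false ∧ lab i c = true}

def rZeros (c : κ) : Set ι := {i | A i c = false ∧ lab i c = false}

variable {A lab}

theorem isUpperSet_lZeros [PartialOrder κ]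
    (hL : ∀ i c, A i c = false → lab i c = true →
      ∀ c', c < c' → A i c' = false ∧ lab i c' = true) (i : ι) :
    IsUpperSet (lZeros A lab i) := by
  intro c c' hcc' hc
  rcases hcc'.lt_or_eq with hlt | rfl
  exacts [hL i c hc.1 hc.2 c' hlt, hc]

theorem isUpperSet_rZeros [PartialOrder ι]
    (hR : ∀ i c, A i c = false → lab i c = false →
      ∀ i', i < i' → A i' c = false ∧ lab i' c = false) (c : κ) :
    IsUpperSet (rZeros A lab c) := by
  intro i i' hii' hi
  rcases hii'.lt_or_eq with hlt | rfl
  exacts [hR i c hi.1 hi.2 i' hlt, hi]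

theorem lZeros_subset_pair {i : ι} {x e : κ} (h : ∀ c, c ≠ x → c ≠ e → A i c = true) :
    lZeros A lab i ⊆ {x, e} := by
  intro c hc
  by_contra hxe
  simp only [Set.mem_insert_iff, Set.mem_singleton_iff, not_or] at hxe
  simp [lZeros, h c hxe.1 hxe.2] at hc

theorem rZeros_subset_pair {c : κ} {x e : ι} (h : ∀ i, i ≠ x → i ≠ e → A i c = true) :
    rZeros A lab c ⊆ {x, e} := by
  intro i hi
  by_contra hxe
  simp only [Set.mem_insert_iff, Set.mem_singleton_iff, not_or] at hxe
  simp [rZeros, h i hxe.1 hxe.2] at hi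

end Labeling

theorem forbidden_configuration_general {n m : ℕ} (A : Fin n → Fin m → Bool)
    (lab : Fin n → Fin m → Bool)
    (hL : ∀ i c, A i c = false → lab i c = true →
      ∀ c', c < c' → A i c' = false ∧ lab i c' = true)
    (hR : ∀ i c, A i c = false → lab i c = false →
      ∀ i', i < i' → A i' c = false ∧ lab i' c = false)
    (r₂ r₃ r₄ : Fin n) (c₂ c₃ c₄ : Fin m)
    (h23 : A r₂ c₃ = false ∧ lab r₂ c₃ = true)
    (hrow2 : ∀ c, c ≠ c₃ → c ≠ c₄ → A r₂ c = true)
    (h32 : A r₃ c₂ = false ∧ lab r₃ c₂ = false)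
    (hcol2 : ∀ i, i ≠ r₃ → i ≠ r₄ → A i c₂ = true)
    (hr3L : ∃ a b : Fin m, a ≠ b ∧ (A r₃ a = false ∧ lab r₃ a = true) ∧
      (A r₃ b = false ∧ lab r₃ b = true))
    (hc3R : ∃ u v : Fin n, u ≠ v ∧ (A u c₃ = false ∧ lab u c₃ = false) ∧
      (A v c₃ = false ∧ lab v c₃ = false)) :
    False := by
  obtain ⟨a, b, hab, ha, hb⟩ := hr3L
  obtain ⟨u, v, huv, hu, hv⟩ := hc3R
  have hLentry : c₃ ∈ lZeros A lab r₃ :=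
    (isUpperSet_lZeros hL r₃).mem_of_nontrivial_of_subset_pair (isUpperSet_lZeros hL r₂)
      h23 (lZeros_subset_pair hrow2) ⟨a, ha, b, hb, hab⟩
  have hRentry : r₃ ∈ rZeros A lab c₃ :=
    (isUpperSet_rZeros hR c₃).mem_of_nontrivial_of_subset_pair (isUpperSet_rZeros hR c₂)
      h32 (rZeros_subset_pair hcol2) ⟨u, hu, v, hv, huv⟩
  simpa [hLentry.2] using hRentry.2

/-- The forbidden configuration: with the rows and columns of a (VCI) matrix ordered and the
`0`-entries labeled `L` (encoded `true`) / `R` (encoded `false`) as in the structure lemma,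
there cannot exist distinct rows `r₁,…,r₄` and distinct columns `c₁,…,c₄` such that
`(r₁,c₄),(r₂,c₄),(r₂,c₃)` are `L`-labeled `0`-entries with all other entries of rows
`r₁,r₂` equal to `1`; `(r₄,c₁),(r₄,c₂),(r₃,c₂)` are `R`-labeled `0`-entries with all other
entries of columns `c₁,c₂` equal to `1`; row `r₃` has at least two `L`-entries and column
`c₃` has at least two `R`-entries. -/
theorem forbidden_configuration {n m : ℕ} (A : Fin n → Fin m → Bool)
    (lab : Fin n → Fin m → Bool)
    (hL : ∀ i c, A i c = false → lab i c = true →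
      ∀ c', c < c' → A i c' = false ∧ lab i c' = true)
    (hR : ∀ i c, A i c = false → lab i c = false →
      ∀ i', i < i' → A i' c = false ∧ lab i' c = false)
    (r₁ r₂ r₃ r₄ : Fin n) (c₁ c₂ c₃ c₄ : Fin m)
    (hrdist : ([r₁, r₂, r₃, r₄] : List (Fin n)).Pairwise (· ≠ ·))
    (hcdist : ([c₁, c₂, c₃, c₄] : List (Fin m)).Pairwise (· ≠ ·))
    (h14 : A r₁ c₄ = false ∧ lab r₁ c₄ = true)
    (h24 : A r₂ c₄ = false ∧ lab r₂ c₄ = true)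
    (h23 : A r₂ c₃ = false ∧ lab r₂ c₃ = true)
    (hrow1 : ∀ c, c ≠ c₄ → A r₁ c = true)
    (hrow2 : ∀ c, c ≠ c₃ → c ≠ c₄ → A r₂ c = true)
    (h41 : A r₄ c₁ = false ∧ lab r₄ c₁ = false)
    (h42 : A r₄ c₂ = false ∧ lab r₄ c₂ = false)
    (h32 : A r₃ c₂ = false ∧ lab r₃ c₂ = false)
    (hcol1 : ∀ i, i ≠ r₄ → A i c₁ = true)
    (hcol2 : ∀ i, i ≠ r₃ → i ≠ r₄ → A i c₂ = true)
    (hr3L : ∃ a b : Fin m, a ≠ b ∧ (A r₃ a = false ∧ lab r₃ a = true) ∧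
      (A r₃ b = false ∧ lab r₃ b = true))
    (hc3R : ∃ u v : Fin n, u ≠ v ∧ (A u c₃ = false ∧ lab u c₃ = false) ∧
      (A v c₃ = false ∧ lab v c₃ = false)) :
    False :=
  forbidden_configuration_general A lab hL hR r₂ r₃ r₄ c₂ c₃ c₄ h23 hrow2 h32 hcol2 hr3L hc3R
end
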